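/- arXiv:2102.09929 — 2 statements merged into one kernel-verified Lean document; each statement's English description precedes it below -/
import Mathlib

section
/- For any nonzero rationals a₀, b₀ and any rational a₁, the function h(x) = ((a₁²(a₀⁶ − b₀⁶)/(12a₀b₀⁶))x² + a₁x + a₀)³ + (−(a₁²(a₀⁶ − b₀⁶)/(12a₀²b₀⁵))x² − (a₀²a₁/b₀²)x + b₀)³ is even. -/
/-!
Writing `f = A x² + B x + C` and `g = D x² + E x + F`, the odd part of `f³ + g³` is
`x (3 (B A² + E D²) x⁴ + (6 (B A C + E D F) + B³ + E³) x² + 3 (B C² + E F²))`,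
so `f³ + g³` is even as soon as these three coefficients vanish. For the coefficients of the
theorem each of them cancels once the denominators `a₀` and `b₀` are cleared.
-/

theorem cube_add_cube_even_of_odd_coeffs_eq_zero {R : Type*} [CommRing R]
    (A B C D E F x : R) (h₄ : B * A ^ 2 + E * D ^ 2 = 0)
    (h₂ : 6 * (B * A * C + E * D * F) + B ^ 3 + E ^ 3 = 0) (h₀ : B * C ^ 2 + E * F ^ 2 = 0) :
    (A * x ^ 2 + B * x + C) ^ 3 + (D * x ^ 2 + E * x + F) ^ 3
      = (A * (-x) ^ 2 + B * (-x) + C) ^ 3 + (D * (-x) ^ 2 + E * (-x) + F) ^ 3 := by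
  linear_combination (6 * x ^ 5) * h₄ + (2 * x ^ 3) * h₂ + (6 * x) * h₀

theorem stmt7 (a₀ a₁ b₀ : ℚ) (ha₀ : a₀ ≠ 0) (hb₀ : b₀ ≠ 0) (x : ℚ) :
    ((a₁^2*(a₀^6 - b₀^6)/(12*a₀*b₀^6))*x^2 + a₁*x + a₀)^3
      + (-(a₁^2*(a₀^6 - b₀^6)/(12*a₀^2*b₀^5))*x^2 - (a₀^2*a₁/b₀^2)*x + b₀)^3
    = ((a₁^2*(a₀^6 - b₀^6)/(12*a₀*b₀^6))*(-x)^2 + a₁*(-x) + a₀)^3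
      + (-(a₁^2*(a₀^6 - b₀^6)/(12*a₀^2*b₀^5))*(-x)^2 - (a₀^2*a₁/b₀^2)*(-x) + b₀)^3 := by
  set A := a₁^2*(a₀^6 - b₀^6)/(12*a₀*b₀^6)
  set D := -(a₁^2*(a₀^6 - b₀^6)/(12*a₀^2*b₀^5))
  set E := -(a₀^2*a₁/b₀^2)
  have h₄ : a₁ * A ^ 2 + E * D ^ 2 = 0 := by
    simp only [A, D, E]; field_simp; ring
  have h₂ : 6 * (a₁ * A * a₀ + E * D * b₀) + a₁ ^ 3 + E ^ 3 = 0 := by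
    simp only [A, D, E]; field_simp; ring
  have h₀ : a₁ * a₀ ^ 2 + E * b₀ ^ 2 = 0 := by
    simp only [E]; field_simp; ring
  linear_combination cube_add_cube_even_of_odd_coeffs_eq_zero A a₁ a₀ D E b₀ x h₄ h₂ h₀
end

section
/- For all integers p, q, x, y: (3qy² + 6qp³xy − q(p⁶ − q⁶)x²)³ + (3py² − 6pq³xy + p(p⁶ − q⁶)x²)³ = (3qy² − 6qp³xy − q(p⁶ − q⁶)x²)³ + (3py² + 6pq³xy + p(p⁶ − q⁶)x²)³. -/
theorem cube_add_cube_eq_cube_add_cube_of_quadratic_forms {R : Type*} [CommRing R]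
    (p q x y : R) :
    (3*q*y^2 + 6*q*p^3*x*y - q*(p^6 - q^6)*x^2)^3
      + (3*p*y^2 - 6*p*q^3*x*y + p*(p^6 - q^6)*x^2)^3
    = (3*q*y^2 - 6*q*p^3*x*y - q*(p^6 - q^6)*x^2)^3
      + (3*p*y^2 + 6*p*q^3*x*y + p*(p^6 - q^6)*x^2)^3 := by
  ring

theorem stmt9 (p q x y : ℤ) :
    (3*q*y^2 + 6*q*p^3*x*y - q*(p^6 - q^6)*x^2)^3
      + (3*p*y^2 - 6*p*q^3*x*y + p*(p^6 - q^6)*x^2)^3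
    = (3*q*y^2 - 6*q*p^3*x*y - q*(p^6 - q^6)*x^2)^3
      + (3*p*y^2 + 6*p*q^3*x*y + p*(p^6 - q^6)*x^2)^3 :=
  cube_add_cube_eq_cube_add_cube_of_quadratic_forms p q x y
end
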